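/- arXiv:0707.3804 — 3 statements merged into one kernel-verified Lean document; each statement's English description precedes it below -/
import Mathlib

section
/- Suppose V : ℝⁿ → ℝ is continuously differentiable and there exist class K∞ functions α₁ ≤ α₂ (pointwise, i.e., α₁(r) ≤ α₂(r)) and a constant d ≥ 0 such that for every x with |π_k(x)| ≥ d: (1) α₁(|π_k(x)|) ≤ V(x) ≤ α₂(|π_k(x)|), and (2) the derivative of V along trajectories of the vector field X is ≤ 0. Then X is fiberwise practically stable with respect to π_k: there exist a class K∞ function γ and constant c ≥ 0 such that sup_t |π_k(x(t,x))| ≤ γ(|π_k(x)|) + c for every initial condition x (with trajectories defined for all t ≥ 0). One can take γ = α₁⁻¹ ∘ α₂ and c = d + α₁⁻¹(α₂(d)). -/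
/-!
Put `r = max d |π_k(x)|`. While `|π_k|` stays above `r ≥ d`, the function `V` cannot increase along
the trajectory, so from the last time `s` at which `|π_k| = r` we get
`α₁ |π_k(x(t))| ≤ V(x(t)) ≤ V(x(s)) ≤ α₂ r`; when `|π_k(x(t))| ≤ r` the same bound follows from
`α₁ ≤ α₂`. Inverting `α₁` gives `|π_k(x(t))| ≤ α₁⁻¹ (α₂ r) ≤ γ |π_k(x)| + γ d` with `γ = α₁⁻¹ ∘ α₂`.
-/

open Filter Set

/-- A class `K∞` function. -/
def ClassKInf (γ : ℝ → ℝ) : Prop :=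
  ContinuousOn γ (Set.Ici 0) ∧ StrictMonoOn γ (Set.Ici 0) ∧ γ 0 = 0 ∧
    Tendsto γ atTop atTop

open Function

namespace ClassKInf

variable {α β : ℝ → ℝ}

lemma nonneg (h : ClassKInf α) {r : ℝ} (hr : 0 ≤ r) : 0 ≤ α r := by
  simpa only [h.2.2.1] using h.2.1.monotoneOn self_mem_Ici hr hr

lemma comp (hβ : ClassKInf β) (hα : ClassKInf α) : ClassKInf (β ∘ α) :=
  ⟨hβ.1.comp hα.1 fun _ ↦ hα.nonneg, hβ.2.1.comp hα.2.1 fun _ ↦ hα.nonneg,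
    by simp only [comp_apply, hα.2.2.1, hβ.2.2.1], hβ.2.2.2.comp hα.2.2.2⟩

lemma apply_max_le_add (h : ClassKInf α) {a b : ℝ} (ha : 0 ≤ a) (hb : 0 ≤ b) :
    α (max a b) ≤ α a + α b := by
  rcases le_total a b with hab | hab
  · simpa only [max_eq_right hab] using le_add_of_nonneg_left (h.nonneg ha)
  · simpa only [max_eq_left hab] using le_add_of_nonneg_right (h.nonneg hb)

lemma surjOn (h : ClassKInf α) : SurjOn α (Ici 0) (Ici 0) := by
  intro y hy
  obtain ⟨b, hyb, hb⟩ := ((tendsto_atTop.1 h.2.2.2 y).and (eventually_ge_atTop 0)).exists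
  obtain ⟨r, hr, hry⟩ := intermediate_value_Icc hb (h.1.mono Icc_subset_Ici_self)
    ⟨h.2.2.1.symm ▸ hy, hyb⟩
  exact ⟨r, hr.1, hry⟩

lemma invFunOn (h : ClassKInf α) : ClassKInf (Function.invFunOn α (Ici 0)) := by
  set β := Function.invFunOn α (Ici 0)
  have hmaps : MapsTo β (Ici 0) (Ici 0) := h.surjOn.mapsTo_invFunOn
  have hright : RightInvOn β α (Ici 0) := h.surjOn.rightInvOn_invFunOn
  have hleft : LeftInvOn β α (Ici 0) := h.2.1.injOn.leftInvOn_invFunOn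
  have hmono : StrictMonoOn β (Ici 0) := fun y hy y' hy' hlt ↦
    (h.2.1.lt_iff_lt (hmaps hy) (hmaps hy')).1 (by rwa [hright hy, hright hy'])
  have himage : β '' Ici 0 = Ici 0 := by
    nth_rewrite 1 [← h.surjOn.image_eq_of_mapsTo fun _ ↦ h.nonneg]
    exact hleft.image_image
  have hzero : β 0 = 0 := by simpa only [h.2.2.1] using hleft self_mem_Ici
  refine ⟨fun a ha ↦ ?_, hmono, hzero, tendsto_atTop_atTop.2 fun b ↦ ⟨α (max b 0), fun a ha ↦ ?_⟩⟩
  · rcases (mem_Ici.1 ha).eq_or_lt with rfl | ha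
    · refine hmono.continuousWithinAt_right_of_image_mem_nhdsWithin self_mem_nhdsWithin ?_
      rw [himage, hzero]
      exact self_mem_nhdsWithin
    · have hβa : 0 < β a := hzero ▸ hmono self_mem_Ici ha.le ha
      refine (hmono.continuousAt_of_image_mem_nhds (Ici_mem_nhds ha) ?_).continuousWithinAt
      rw [himage]
      exact Ici_mem_nhds hβa
  · have hb : 0 ≤ max b 0 := le_max_right b 0
    calc b ≤ max b 0 := le_max_left b 0
      _ = β (α (max b 0)) := (hleft hb).symm
      _ ≤ β a := hmono.monotoneOn (h.nonneg hb) (le_trans (h.nonneg hb) ha) ha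

lemma le_invFunOn_of_le (h : ClassKInf α) {x y : ℝ} (hx : 0 ≤ x) (hy : 0 ≤ y) (hxy : α x ≤ y) :
    x ≤ Function.invFunOn α (Ici 0) y := by
  rwa [← h.2.1.le_iff_le hx (h.surjOn.mapsTo_invFunOn hy), h.surjOn.rightInvOn_invFunOn hy]

end ClassKInf

lemma ContinuousOn.exists_last_eq_of_le_of_lt {z : ℝ → ℝ} {a b r : ℝ}
    (hz : ContinuousOn z (Icc a b)) (hab : a ≤ b) (ha : z a ≤ r) (hb : r < z b) :
    ∃ s ∈ Ico a b, z s = r ∧ ∀ u ∈ Ioc s b, r < z u := by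
  have hcompact : IsCompact (Icc a b ∩ z ⁻¹' Iic r) :=
    isCompact_Icc.of_isClosed_subset (hz.preimage_isClosed_of_isClosed isClosed_Icc isClosed_Iic)
      inter_subset_left
  obtain ⟨s, ⟨hs, hsr⟩, hmax⟩ := hcompact.exists_isGreatest ⟨a, left_mem_Icc.2 hab, ha⟩
  have hsb : s < b := hs.2.lt_of_ne fun hsb ↦ (hsb ▸ hb).not_ge hsr
  have hlast : ∀ u ∈ Ioc s b, r < z u := fun u hu ↦
    lt_of_not_ge fun hur ↦ hu.1.not_ge (hmax ⟨⟨hs.1.trans hu.1.le, hu.2⟩, hur⟩)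
  obtain ⟨c, hc, hcr⟩ := intermediate_value_Icc hsb.le (hz.mono (Icc_subset_Icc_left hs.1))
    ⟨hsr, hb.le⟩
  obtain rfl : c = s := le_antisymm (hmax ⟨⟨hs.1.trans hc.1, hc.2⟩, hcr.le⟩) hc.1
  exact ⟨c, ⟨hs.1, hsb⟩, hcr, hlast⟩

lemma lyapunov_sandwich_bound {z v α₁ α₂ : ℝ → ℝ} {d t : ℝ} (hz : Continuous z)
    (hz_nonneg : ∀ s, 0 ≤ z s) (hv : Differentiable ℝ v) (hα₁ : MonotoneOn α₁ (Ici 0))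
    (hle : ∀ r, 0 ≤ r → α₁ r ≤ α₂ r) (hd : 0 ≤ d)
    (hsandwich : ∀ s, d ≤ z s → α₁ (z s) ≤ v s ∧ v s ≤ α₂ (z s))
    (hdec : ∀ s, 0 ≤ s → d ≤ z s → deriv v s ≤ 0) (ht : 0 ≤ t) :
    α₁ (z t) ≤ α₂ (max d (z 0)) := by
  set r := max d (z 0)
  have hdr : d ≤ r := le_max_left _ _
  by_cases hzt : z t ≤ r
  · exact (hα₁ (hz_nonneg t) (hd.trans hdr) hzt).trans (hle r (hd.trans hdr))
  obtain ⟨s, hs, hsr, hlast⟩ :=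
    hz.continuousOn.exists_last_eq_of_le_of_lt ht (le_max_right _ _) (not_le.1 hzt)
  have hanti : AntitoneOn v (Icc s t) := by
    refine antitoneOn_of_deriv_nonpos (convex_Icc s t) hv.continuous.continuousOn
      hv.differentiableOn fun u hu ↦ ?_
    rw [interior_Icc] at hu
    exact hdec u (hs.1.trans hu.1.le) (hdr.trans (hlast u ⟨hu.1, hu.2.le⟩).le)
  calc α₁ (z t) ≤ v t := (hsandwich t (hdr.trans (not_le.1 hzt).le)).1
    _ ≤ v s := hanti (left_mem_Icc.2 hs.2.le) (right_mem_Icc.2 hs.2.le) hs.2.le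
    _ ≤ α₂ (z s) := (hsandwich s (hsr ▸ hdr)).2
    _ = α₂ r := by rw [hsr]

theorem fiberwise_practical_stability_general (m k : ℕ)
    (flowX : ℝ → EuclideanSpace ℝ (Fin m) × EuclideanSpace ℝ (Fin k) →
      EuclideanSpace ℝ (Fin m) × EuclideanSpace ℝ (Fin k))
    (hflow0 : ∀ x, flowX 0 x = x)
    (V : EuclideanSpace ℝ (Fin m) × EuclideanSpace ℝ (Fin k) → ℝ)
    (α₁ α₂ : ℝ → ℝ) (hα₁ : ClassKInf α₁) (hα₂ : ClassKInf α₂)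
    (hle : ∀ r : ℝ, 0 ≤ r → α₁ r ≤ α₂ r)
    (d : ℝ) (hd : 0 ≤ d)
    (hsandwich : ∀ x : EuclideanSpace ℝ (Fin m) × EuclideanSpace ℝ (Fin k),
      d ≤ ‖x.2‖ → α₁ ‖x.2‖ ≤ V x ∧ V x ≤ α₂ ‖x.2‖)
    (hdiff : ∀ x, Differentiable ℝ (fun s : ℝ => V (flowX s x)))
    (hcont : ∀ x, Continuous (fun s : ℝ => flowX s x))
    (hdec : ∀ (x) (t : ℝ), 0 ≤ t → d ≤ ‖(flowX t x).2‖ →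
      deriv (fun s : ℝ => V (flowX s x)) t ≤ 0) :
    ∃ (γ : ℝ → ℝ) (c : ℝ), ClassKInf γ ∧ 0 ≤ c ∧
      ∀ (x) (t : ℝ), 0 ≤ t → ‖(flowX t x).2‖ ≤ γ ‖x.2‖ + c := by
  set γ := invFunOn α₁ (Ici 0) ∘ α₂
  have hγ : ClassKInf γ := hα₁.invFunOn.comp hα₂
  refine ⟨γ, γ d, hγ, hγ.nonneg hd, fun x t ht ↦ ?_⟩
  have hbound : α₁ ‖(flowX t x).2‖ ≤ α₂ (max d ‖x.2‖) := by
    simpa only [hflow0] using lyapunov_sandwich_bound (z := fun s ↦ ‖(flowX s x).2‖)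
      (continuous_snd.comp (hcont x)).norm (fun _ ↦ norm_nonneg _) (hdiff x)
      hα₁.2.1.monotoneOn hle hd (fun s ↦ hsandwich _) (hdec x) ht
  calc ‖(flowX t x).2‖ ≤ γ (max ‖x.2‖ d) := by
        rw [max_comm]
        exact hα₁.le_invFunOn_of_le (norm_nonneg _) (hα₂.nonneg (hd.trans (le_max_left _ _)))
          hbound
    _ ≤ γ ‖x.2‖ + γ d := hγ.apply_max_le_add (norm_nonneg _) hd

/-- A Lyapunov-type function sandwiched between class `K∞` functions of `|π_k(x)|`
(for `|π_k(x)| ≥ d`) and nonincreasing along trajectories there implies fiberwise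
practical stability with respect to `π_k`. -/
theorem fiberwise_practical_stability (m k : ℕ)
    (flowX : ℝ → EuclideanSpace ℝ (Fin m) × EuclideanSpace ℝ (Fin k) →
      EuclideanSpace ℝ (Fin m) × EuclideanSpace ℝ (Fin k))
    (hflow0 : ∀ x, flowX 0 x = x)
    (V : EuclideanSpace ℝ (Fin m) × EuclideanSpace ℝ (Fin k) → ℝ)
    (hV : ContDiff ℝ 1 V)
    (α₁ α₂ : ℝ → ℝ) (hα₁ : ClassKInf α₁) (hα₂ : ClassKInf α₂)
    (hle : ∀ r : ℝ, 0 ≤ r → α₁ r ≤ α₂ r)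
    (d : ℝ) (hd : 0 ≤ d)
    (hsandwich : ∀ x : EuclideanSpace ℝ (Fin m) × EuclideanSpace ℝ (Fin k),
      d ≤ ‖x.2‖ → α₁ ‖x.2‖ ≤ V x ∧ V x ≤ α₂ ‖x.2‖)
    (hdiff : ∀ x, Differentiable ℝ (fun s : ℝ => V (flowX s x)))
    (hcont : ∀ x, Continuous (fun s : ℝ => flowX s x))
    (hdec : ∀ (x) (t : ℝ), 0 ≤ t → d ≤ ‖(flowX t x).2‖ →
      deriv (fun s : ℝ => V (flowX s x)) t ≤ 0) :
    ∃ (γ : ℝ → ℝ) (c : ℝ), ClassKInf γ ∧ 0 ≤ c ∧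
      ∀ (x) (t : ℝ), 0 ≤ t → ‖(flowX t x).2‖ ≤ γ ‖x.2‖ + c :=
  fiberwise_practical_stability_general m k flowX hflow0 V α₁ α₂ hα₁ hα₂ hle d hd hsandwich hdiff
    hcont hdec
end

section
/- Main approximate-reduction theorem: Let X be a smooth complete vector field on ℝⁿ = ℝᵐ × ℝᵏ that is fiberwise practically stable with respect to π_k (with class K∞ function γ and constant c ≥ 0), and suppose the control system F(y, z) = Dπ_m · X(y, z) on ℝᵐ with input z ∈ ℝᵏ is IUBIBSS with gain functions γ₁, γ₂ (class K∞). Define the vector field Y on ℝᵐ by Y(y) = F(y, 0). Then X is approximately π_m-related to Y: for every x ∈ ℝⁿ and t ≥ 0, |π_m(x(t,x)) − y(t, π_m(x))| ≤ γ₂(2 γ(|π_k(x)|)) + γ₂(2c), where the right side is a class K∞ function of |π_k(x)| plus a constant. -/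
/-!
Feed the trajectory of `X` and the trajectory of `Y` from the same base point `π_m(x)` into the
IUBIBSS estimate: the initial-state term vanishes, and the input term is `γ₂` of the supremum of
`|π_k(x(s,x))|` over `[0, t]`, which fiberwise practical stability bounds by `γ(|π_k(x)|) + c`.
Finally `γ₂(a + b) ≤ γ₂(2a) + γ₂(2b)`, since `a + b ≤ 2 max a b`.
-/

open Filter Set

namespace ClassKInf

variable {γ : ℝ → ℝ}

theorem map_zero (hγ : ClassKInf γ) : γ 0 = 0 := hγ.2.2.1

theorem monotoneOn (hγ : ClassKInf γ) : MonotoneOn γ (Ici 0) := hγ.2.1.monotoneOn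

theorem nonneg_s7 (hγ : ClassKInf γ) {a : ℝ} (ha : 0 ≤ a) : 0 ≤ γ a :=
  hγ.map_zero ▸ hγ.monotoneOn self_mem_Ici ha ha

theorem le_map_two_mul_add_map_two_mul (hγ : ClassKInf γ) {s a b : ℝ} (hs : 0 ≤ s)
    (hsab : s ≤ a + b) (ha : 0 ≤ a) (hb : 0 ≤ b) : γ s ≤ γ (2 * a) + γ (2 * b) := by
  rcases le_total a b with hab | hab
  · have : γ s ≤ γ (2 * b) := hγ.monotoneOn hs (by simp only [mem_Ici]; linarith) (by linarith)
    linarith [hγ.nonneg_s7 (by linarith : 0 ≤ 2 * a)]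
  · have : γ s ≤ γ (2 * a) := hγ.monotoneOn hs (by simp only [mem_Ici]; linarith) (by linarith)
    linarith [hγ.nonneg_s7 (by linarith : 0 ≤ 2 * b)]

end ClassKInf

/-- Main approximate-reduction theorem.  `flowX` is the flow of `X` on
`ℝᵐ × ℝᵏ`, `trajF v y t` is the trajectory of the control system
`ẏ = F(y, v(t))` with `F = Dπ_m · X`, and `flowY` is the flow of the reduced
vector field `Y(y) = F(y, 0)`, i.e. the trajectory of `F` with zero input.
Fiberwise practical stability of `X` and IUBIBSS of `F` yield that `X` is
approximately `π_m`-related to `Y`, with the explicit bound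
`γ₂(2 γ(|π_k(x)|)) + γ₂(2 c)`. -/
theorem approximate_reduction (m k : ℕ)
    (flowX : ℝ → EuclideanSpace ℝ (Fin m) × EuclideanSpace ℝ (Fin k) →
      EuclideanSpace ℝ (Fin m) × EuclideanSpace ℝ (Fin k))
    (trajF : (ℝ → EuclideanSpace ℝ (Fin k)) → EuclideanSpace ℝ (Fin m) → ℝ →
      EuclideanSpace ℝ (Fin m))
    (flowY : ℝ → EuclideanSpace ℝ (Fin m) → EuclideanSpace ℝ (Fin m))
    (γ γ₁ γ₂ : ℝ → ℝ) (c : ℝ)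
    (hγ : ClassKInf γ) (hγ₁ : ClassKInf γ₁) (hγ₂ : ClassKInf γ₂) (hc : 0 ≤ c)
    -- fiberwise practical stability of X with respect to π_k
    (hfps : ∀ (x) (t : ℝ), 0 ≤ t → ‖(flowX t x).2‖ ≤ γ ‖x.2‖ + c)
    -- IUBIBSS of the control system F
    (hIUBIBSS : ∀ (v₁ v₂ : ℝ → EuclideanSpace ℝ (Fin k))
      (y₁ y₂ : EuclideanSpace ℝ (Fin m)) (t : ℝ), 0 ≤ t →
      ‖trajF v₁ y₁ t - trajF v₂ y₂ t‖ ≤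
        γ₁ ‖y₁ - y₂‖ + γ₂ (⨆ s : Set.Icc (0:ℝ) t, ‖v₁ s - v₂ s‖))
    -- π_m ∘ flowX is the trajectory of F with input π_k ∘ flowX
    (hlink : ∀ (x) (t : ℝ), (flowX t x).1 = trajF (fun s => (flowX s x).2) x.1 t)
    -- the flow of Y is the trajectory of F with zero input
    (hY : ∀ (y) (t : ℝ), flowY t y = trajF (fun _ => 0) y t) :
    ∀ (x) (t : ℝ), 0 ≤ t →
      ‖(flowX t x).1 - flowY t x.1‖ ≤ γ₂ (2 * γ ‖x.2‖) + γ₂ (2 * c) := by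
  intro x t ht
  have hγx : 0 ≤ γ ‖x.2‖ := hγ.nonneg_s7 (norm_nonneg _)
  set S := ⨆ s : Icc (0 : ℝ) t, ‖(flowX s x).2‖
  have hS : S ≤ γ ‖x.2‖ + c := Real.iSup_le (fun s => hfps x s s.2.1) (by linarith)
  calc ‖(flowX t x).1 - flowY t x.1‖
      ≤ γ₁ ‖x.1 - x.1‖ + γ₂ S := by
        simpa only [hlink, hY, sub_zero] using hIUBIBSS _ (fun _ => 0) x.1 x.1 t ht
    _ = γ₂ S := by rw [sub_self, norm_zero, hγ₁.map_zero, zero_add]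
    _ ≤ γ₂ (2 * γ ‖x.2‖) + γ₂ (2 * c) :=
        hγ₂.le_map_two_mul_add_map_two_mul (Real.iSup_nonneg fun _ => norm_nonneg _) hS hγx hc
end

section
/- Under the assumptions of the approximate-reduction theorem (X fiberwise practically stable w.r.t. π_k with γ, c; F = Dπ_m · X IUBIBSS with gains γ₁, γ₂; Y(y) = F(y,0)), for any compact set S ⊆ ℝⁿ there exists δ > 0 such that for every x ∈ S and every y ∈ π_m(S), |π_m(x(t,x)) − y(t, y)| ≤ δ for all t ≥ 0. One may take δ = max over (x,y) ∈ S × π_m(S) of γ₁(|π_m(x) − y|) + γ₂(2γ(|π_k(x)|)) + γ₂(2c). -/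
open Filter Set

/-- Corollary of the approximate-reduction theorem: under the same assumptions,
for any compact set `S` of initial conditions there is a uniform bound `δ` on the
gap between projected trajectories of `X` starting in `S` and trajectories of the
reduced field `Y` starting in `π_m(S)`. -/
theorem approximate_reduction_compact (m k : ℕ)
    (flowX : ℝ → EuclideanSpace ℝ (Fin m) × EuclideanSpace ℝ (Fin k) →
      EuclideanSpace ℝ (Fin m) × EuclideanSpace ℝ (Fin k))
    (trajF : (ℝ → EuclideanSpace ℝ (Fin k)) → EuclideanSpace ℝ (Fin m) → ℝ →
      EuclideanSpace ℝ (Fin m))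
    (flowY : ℝ → EuclideanSpace ℝ (Fin m) → EuclideanSpace ℝ (Fin m))
    (γ γ₁ γ₂ : ℝ → ℝ) (c : ℝ)
    (hγ : ClassKInf γ) (hγ₁ : ClassKInf γ₁) (hγ₂ : ClassKInf γ₂) (hc : 0 ≤ c)
    (hfps : ∀ (x) (t : ℝ), 0 ≤ t → ‖(flowX t x).2‖ ≤ γ ‖x.2‖ + c)
    (hIUBIBSS : ∀ (v₁ v₂ : ℝ → EuclideanSpace ℝ (Fin k))
      (y₁ y₂ : EuclideanSpace ℝ (Fin m)) (t : ℝ), 0 ≤ t →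
      ‖trajF v₁ y₁ t - trajF v₂ y₂ t‖ ≤
        γ₁ ‖y₁ - y₂‖ + γ₂ (⨆ s : Set.Icc (0:ℝ) t, ‖v₁ s - v₂ s‖))
    (hlink : ∀ (x) (t : ℝ), (flowX t x).1 = trajF (fun s => (flowX s x).2) x.1 t)
    (hY : ∀ (y) (t : ℝ), flowY t y = trajF (fun _ => 0) y t)
    (S : Set (EuclideanSpace ℝ (Fin m) × EuclideanSpace ℝ (Fin k)))
    (hS : IsCompact S) :
    ∃ δ : ℝ, 0 < δ ∧ ∀ x ∈ S, ∀ y ∈ Prod.fst '' S, ∀ t : ℝ, 0 ≤ t →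
      ‖(flowX t x).1 - flowY t y‖ ≤ δ := by
  obtain ⟨R₀, hR₀⟩ := hS.isBounded.exists_norm_le
  set R := max R₀ 0 with hRdef
  have hR0 : (0 : ℝ) ≤ R := le_max_right _ _
  have hR : ∀ x ∈ S, ‖x‖ ≤ R := fun x hx => (hR₀ x hx).trans (le_max_left _ _)
  have hγmono := hγ.2.1.monotoneOn
  have hγ₁mono := hγ₁.2.1.monotoneOn
  have hγ₂mono := hγ₂.2.1.monotoneOn
  have hγR0 : 0 ≤ γ R := by
    have := hγ.2.2.1
    calc (0:ℝ) = γ 0 := this.symm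
    _ ≤ γ R := hγmono (by simp [mem_Ici]) (by simpa using hR0) hR0
  have hγ₁nn : 0 ≤ γ₁ (2 * R) := by
    calc (0:ℝ) = γ₁ 0 := hγ₁.2.2.1.symm
    _ ≤ γ₁ (2 * R) := hγ₁mono (by simp [mem_Ici]) (by simp [mem_Ici]; linarith) (by linarith)
  have hγ₂nn : 0 ≤ γ₂ (γ R + c) := by
    calc (0:ℝ) = γ₂ 0 := hγ₂.2.2.1.symm
    _ ≤ γ₂ (γ R + c) := hγ₂mono (by simp [mem_Ici]) (by simp [mem_Ici]; linarith) (by linarith)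
  refine ⟨γ₁ (2 * R) + γ₂ (γ R + c) + 1, by linarith, ?_⟩
  rintro x hx y ⟨z, hz, rfl⟩ t ht
  have hne : Nonempty (Set.Icc (0:ℝ) t) := ⟨⟨0, by simp [ht]⟩⟩
  have hx2 : ‖x.2‖ ≤ R := le_trans (norm_snd_le x) (hR x hx)
  have hγx2 : γ ‖x.2‖ ≤ γ R :=
    hγmono (by simp [mem_Ici]) (by simpa using hR0) hx2
  -- bound the sup
  have hv : ∀ s : Set.Icc (0:ℝ) t, ‖(flowX (s:ℝ) x).2 - (0:EuclideanSpace ℝ (Fin k))‖ ≤ γ R + c := by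
    intro s
    rw [sub_zero]
    exact le_trans (hfps x s s.2.1) (by linarith)
  have hsup : (⨆ s : Set.Icc (0:ℝ) t, ‖(flowX (s:ℝ) x).2 - (0:EuclideanSpace ℝ (Fin k))‖) ≤ γ R + c :=
    ciSup_le hv
  have hsup0 : 0 ≤ ⨆ s : Set.Icc (0:ℝ) t, ‖(flowX (s:ℝ) x).2 - (0:EuclideanSpace ℝ (Fin k))‖ := by
    have hbdd : BddAbove (Set.range fun s : Set.Icc (0:ℝ) t =>
        ‖(flowX (s:ℝ) x).2 - (0:EuclideanSpace ℝ (Fin k))‖) := by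
      refine ⟨γ R + c, ?_⟩; rintro r ⟨s, rfl⟩; exact hv s
    exact le_trans (norm_nonneg _) (le_ciSup hbdd (Classical.arbitrary _))
  have hγ₂sup : γ₂ (⨆ s : Set.Icc (0:ℝ) t, ‖(flowX (s:ℝ) x).2 - (0:EuclideanSpace ℝ (Fin k))‖)
      ≤ γ₂ (γ R + c) :=
    hγ₂mono (by simpa [mem_Ici] using hsup0) (by simp [mem_Ici]; linarith) hsup
  have hxy : ‖x.1 - z.1‖ ≤ 2 * R := by
    have h1 : ‖x.1‖ ≤ R := le_trans (norm_fst_le x) (hR x hx)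
    have h2 : ‖z.1‖ ≤ R := le_trans (norm_fst_le z) (hR z hz)
    calc ‖x.1 - z.1‖ ≤ ‖x.1‖ + ‖z.1‖ := norm_sub_le _ _
    _ ≤ 2 * R := by linarith
  have hγ₁xy : γ₁ ‖x.1 - z.1‖ ≤ γ₁ (2 * R) :=
    hγ₁mono (by simp [mem_Ici]) (by simp [mem_Ici]; linarith) hxy
  rw [hlink x t, hY z.1 t]
  have hmain := hIUBIBSS (fun s => (flowX s x).2) (fun _ => 0) x.1 z.1 t ht
  calc ‖trajF (fun s => (flowX s x).2) x.1 t - trajF (fun _ => 0) z.1 t‖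
      ≤ γ₁ ‖x.1 - z.1‖ + γ₂ (⨆ s : Set.Icc (0:ℝ) t,
          ‖(flowX (s:ℝ) x).2 - (0:EuclideanSpace ℝ (Fin k))‖) := hmain
    _ ≤ γ₁ (2 * R) + γ₂ (γ R + c) + 1 := by linarith
end
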